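/- Let f : [0,t] → ℝ be continuously differentiable with α-Hölder continuous derivative for some α ∈ (0,1]. Then the sup-norm of the derivative satisfies ‖f'‖_{L^∞(0,t)} ≤ 4 ‖f‖_{L^∞(0,t)} · max{ t^{-1}, ‖f‖_{L^∞(0,t)}^{-1/(1+α)} · [f']_{C^α(0,t)}^{1/(1+α)} }, where [f']_{C^α} denotes the best α-Hölder constant of f' on [0,t]. -/

import Mathlib

/-!
Fix `s ∈ [0, t]` and a window of length `h ≤ t` inside `[0, t]` containing `s`. The mean value
theorem gives a point of the window where `|f'| ≤ 2‖f‖/h`, and Hölder continuity transports this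
to `s` at a cost of `[f']_α h^α`. Choosing `h` as the reciprocal of the maximum in the statement
balances the two terms and gives the constant `3 ≤ 4`. When `‖f‖ = 0`, `f` vanishes on `[0, t]`
and so does `f'`.
-/

open Set

theorem exists_Icc_add_subset_Icc_mem {a b s h : ℝ} (hs : s ∈ Icc a b) (h0 : 0 ≤ h)
    (hh : h ≤ b - a) :
    ∃ c, Icc c (c + h) ⊆ Icc a b ∧ s ∈ Icc c (c + h) := by
  refine ⟨min s (b - h), Icc_subset_Icc (le_min hs.1 (by linarith)) ?_, min_le_left _ _, ?_⟩
  · linarith [min_le_right s (b - h)]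
  · rcases le_total s (b - h) with hsb | hsb
    · rw [min_eq_left hsb]; linarith
    · rw [min_eq_right hsb]; linarith [hs.2]

theorem exists_abs_deriv_le_of_abs_le {f f' : ℝ → ℝ} {c d M : ℝ} (hcd : c < d)
    (hderiv : ∀ x ∈ Icc c d, HasDerivAt f (f' x) x) (hM : ∀ x ∈ Icc c d, |f x| ≤ M) :
    ∃ ξ ∈ Ioo c d, |f' ξ| ≤ 2 * M / (d - c) := by
  obtain ⟨ξ, hξ, hslope⟩ := exists_hasDerivAt_eq_slope f f' hcd
    (fun x hx => (hderiv x hx).continuousAt.continuousWithinAt)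
    (fun x hx => hderiv x (Ioo_subset_Icc_self hx))
  refine ⟨ξ, hξ, ?_⟩
  rw [hslope, abs_div, abs_of_pos (sub_pos.2 hcd)]
  gcongr
  calc |f d - f c| ≤ |f d| + |f c| := abs_sub _ _
    _ ≤ 2 * M := by linarith [hM d (right_mem_Icc.2 hcd.le), hM c (left_mem_Icc.2 hcd.le)]

theorem abs_deriv_le_of_holder {f f' : ℝ → ℝ} {a b M H α s h : ℝ} (hα : 0 ≤ α) (hH : 0 ≤ H)
    (hderiv : ∀ x ∈ Icc a b, HasDerivAt f (f' x) x) (hM : ∀ x ∈ Icc a b, |f x| ≤ M)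
    (hholder : ∀ x ∈ Icc a b, ∀ y ∈ Icc a b, |f' x - f' y| ≤ H * |x - y| ^ α)
    (hs : s ∈ Icc a b) (h0 : 0 < h) (hh : h ≤ b - a) :
    |f' s| ≤ 2 * M / h + H * h ^ α := by
  obtain ⟨c, hsub, hsc⟩ := exists_Icc_add_subset_Icc_mem hs h0.le hh
  obtain ⟨ξ, hξ, hslope⟩ := exists_abs_deriv_le_of_abs_le (lt_add_of_pos_right c h0)
    (fun x hx => hderiv x (hsub hx)) (fun x hx => hM x (hsub hx))
  rw [add_sub_cancel_left] at hslope
  have hdist : |s - ξ| ≤ h := abs_le.2 ⟨by linarith [hξ.2, hsc.1], by linarith [hξ.1, hsc.2]⟩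
  have hmove : |f' s - f' ξ| ≤ H * h ^ α :=
    calc |f' s - f' ξ| ≤ H * |s - ξ| ^ α := hholder s hs ξ (hsub (Ioo_subset_Icc_self hξ))
      _ ≤ H * h ^ α := by gcongr
  linarith [abs_sub_abs_le_abs_sub (f' s) (f' ξ)]

theorem hasDerivAt_eq_zero_of_eqOn_Icc_zero {f : ℝ → ℝ} {a b x f'x : ℝ} (hab : a < b)
    (hf : ∀ y ∈ Icc a b, f y = 0) (hx : x ∈ Icc a b) (hd : HasDerivAt f f'x x) : f'x = 0 :=
  (uniqueDiffOn_Icc hab x hx).eq_deriv _ hd.hasDerivWithinAt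
    ((hasDerivWithinAt_const x _ 0).congr hf (hf x hx))

/-- With `h = K⁻¹` the second term is at most `M K` because `K ^ (1 + α) ≥ H / M`. -/
theorem le_three_mul_max_of_forall_le {y M H t α : ℝ} (hM : 0 < M) (hH : 0 ≤ H) (ht : 0 < t)
    (hα : 0 ≤ α) (hy : ∀ h, 0 < h → h ≤ t → y ≤ 2 * M / h + H * h ^ α) :
    y ≤ 3 * M * max t⁻¹ (M ^ (-(1 / (1 + α))) * H ^ (1 / (1 + α))) := by
  set K := max t⁻¹ (M ^ (-(1 / (1 + α))) * H ^ (1 / (1 + α)))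
  have hK : 0 < K := lt_max_of_lt_left (inv_pos.2 ht)
  have hKt : K⁻¹ ≤ t := inv_le_of_inv_le₀ ht (le_max_left _ _)
  have hHK : H ≤ M * K ^ (1 + α) := by
    have hpow : (M ^ (-(1 / (1 + α))) * H ^ (1 / (1 + α))) ^ (1 + α) = M⁻¹ * H := by
      rw [Real.mul_rpow (by positivity) (by positivity), ← Real.rpow_mul hM.le,
        ← Real.rpow_mul hH, neg_mul, one_div_mul_cancel (by linarith), Real.rpow_neg_one,
        Real.rpow_one]
    calc H = M * (M⁻¹ * H) := by field_simp
      _ ≤ M * K ^ (1 + α) := by rw [← hpow]; gcongr; exact le_max_right _ _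
  calc y ≤ 2 * M / K⁻¹ + H * K⁻¹ ^ α := hy _ (inv_pos.2 hK) hKt
    _ ≤ 2 * M * K + M * K := by
      have hcost : H * K⁻¹ ^ α ≤ M * K := by
        rwa [Real.inv_rpow hK.le, ← div_eq_mul_inv, div_le_iff₀ (by positivity), mul_assoc,
          ← Real.rpow_one_add' hK.le (by linarith)]
      rw [div_inv_eq_mul]
      linarith
    _ = 3 * M * K := by ring

theorem abs_le_ciSup_abs_of_continuousOn {f : ℝ → ℝ} {a b : ℝ} (hf : ContinuousOn f (Icc a b))
    {x : ℝ} (hx : x ∈ Icc a b) : |f x| ≤ ⨆ y : Icc a b, |f y| := by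
  obtain ⟨C, hC⟩ := isCompact_Icc.exists_bound_of_continuousOn hf
  exact le_ciSup (f := fun y : Icc a b => |f y|) ⟨C, by rintro _ ⟨y, rfl⟩; exact hC y y.2⟩ ⟨x, hx⟩

theorem stmt0_general (t α : ℝ) (ht : 0 < t) (hα0 : 0 < α)
    (f f' : ℝ → ℝ) (H : ℝ) (hH : 0 ≤ H)
    (hderiv : ∀ s ∈ Set.Icc (0 : ℝ) t, HasDerivAt f (f' s) s)
    (hholder : ∀ s ∈ Set.Icc (0 : ℝ) t, ∀ r ∈ Set.Icc (0 : ℝ) t,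
      |f' s - f' r| ≤ H * |s - r| ^ α) :
    (⨆ s : Set.Icc (0 : ℝ) t, |f' s|) ≤
      4 * (⨆ s : Set.Icc (0 : ℝ) t, |f s|) *
        max t⁻¹
          ((⨆ s : Set.Icc (0 : ℝ) t, |f s|) ^ (-(1 / (1 + α))) *
            H ^ (1 / (1 + α))) := by
  set M := ⨆ s : Set.Icc (0 : ℝ) t, |f s|
  have hM : ∀ s ∈ Icc 0 t, |f s| ≤ M := fun s hs =>
    abs_le_ciSup_abs_of_continuousOn (fun x hx => (hderiv x hx).continuousAt.continuousWithinAt) hs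
  have : Nonempty (Icc 0 t) := ⟨⟨0, left_mem_Icc.2 ht.le⟩⟩
  refine ciSup_le fun ⟨s, hs⟩ => ?_
  rcases (abs_nonneg _).trans (hM 0 (left_mem_Icc.2 ht.le)) |>.eq_or_lt with hM0 | hMpos
  · have hf : ∀ y ∈ Icc 0 t, f y = 0 := fun y hy => abs_nonpos_iff.1 (hM0 ▸ hM y hy)
    simp [← hM0, hasDerivAt_eq_zero_of_eqOn_Icc_zero ht hf hs (hderiv s hs)]
  · calc |f' s| ≤ 3 * M * max t⁻¹ (M ^ (-(1 / (1 + α))) * H ^ (1 / (1 + α))) :=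
          le_three_mul_max_of_forall_le hMpos hH ht hα0.le fun h h0 hh =>
            abs_deriv_le_of_holder hα0.le hH hderiv hM hholder hs h0 (by rwa [sub_zero])
      _ ≤ _ := by gcongr; norm_num

/-- C^{1,α} interpolation inequality: for f C¹ on [0,t] with α-Hölder derivative
(with Hölder constant H), the sup of the derivative is controlled by
4‖f‖_∞ · max(t⁻¹, ‖f‖_∞^{-1/(1+α)} H^{1/(1+α)}). -/
theorem stmt0 (t α : ℝ) (ht : 0 < t) (hα0 : 0 < α) (hα1 : α ≤ 1)
    (f f' : ℝ → ℝ) (H : ℝ) (hH : 0 ≤ H)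
    (hderiv : ∀ s ∈ Set.Icc (0 : ℝ) t, HasDerivAt f (f' s) s)
    (hholder : ∀ s ∈ Set.Icc (0 : ℝ) t, ∀ r ∈ Set.Icc (0 : ℝ) t,
      |f' s - f' r| ≤ H * |s - r| ^ α) :
    (⨆ s : Set.Icc (0 : ℝ) t, |f' s|) ≤
      4 * (⨆ s : Set.Icc (0 : ℝ) t, |f s|) *
        max t⁻¹
          ((⨆ s : Set.Icc (0 : ℝ) t, |f s|) ^ (-(1 / (1 + α))) *
            H ^ (1 / (1 + α))) :=
  stmt0_general t α ht hα0 f f' H hH hderiv hholder
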